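/- Let $N, k \ge 1$, let $d_1,\dots,d_N, R$ be positive integers, and let $\mathcal{X} \in \mathbb{R}^{d_1 \times \cdots \times d_N}$ be a fixed tensor. Let $\mathcal{T}_1, \dots, \mathcal{T}_k$ be independent tensor train tensors, each of the form $\mathcal{T}_i = [\![\mathcal{G}^{1,i}, \dots, \mathcal{G}^{N,i}]\!]$ where all core entries are i.i.d. standard Gaussian $\mathcal{N}(0,1)$, and define the tensorized Gaussian random projection $f^{TT}_R : \mathbb{R}^{d_1 \times \cdots \times d_N} \to \mathbb{R}^k$ component-wise by $(f^{TT}_R(\mathcal{X}))_i = \frac{1}{\sqrt{k R^{N-1}}} \langle \mathcal{T}_i, \mathcal{X} \rangle$ for $i \in [k]$. Then $\mathbb{E}\,\|f^{TT}_R(\mathcal{X})\|_2^2 = \|\mathcal{X}\|_F^2$. -/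

import Mathlib

open MeasureTheory ProbabilityTheory Matrix Finset

noncomputable section

/-- The Rademacher distribution on `ℝ`: uniform on `{1, -1}`. -/
def radDist : Measure ℝ :=
  (2⁻¹ : ENNReal) • Measure.dirac (1 : ℝ) + (2⁻¹ : ENNReal) • Measure.dirac (-1 : ℝ)

/-- Path-sum contraction of tensor-train cores `G` at multi-index `i`, with the
two boundary bond indices fixed to `a` and `b`. -/
def ttPath {N : ℕ} (d : Fin N → ℕ) (ρ : Fin (N + 1) → ℕ)
    (G : (n : Fin N) → Fin (ρ n.castSucc) → Fin (d n) → Fin (ρ n.succ) → ℝ)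
    (i : (n : Fin N) → Fin (d n)) (a : Fin (ρ 0)) (b : Fin (ρ (Fin.last N))) : ℝ :=
  ∑ r : ((n : Fin (N + 1)) → Fin (ρ n)),
    if r 0 = a ∧ r (Fin.last N) = b then
      ∏ n : Fin N, G n (r n.castSucc) (i n) (r n.succ)
    else 0

/-!
By multilinearity `⟨𝒯_κ, 𝒳⟩ = ∑_{(i, r)} X i · Φ_{(i, r)}`, where `r` is a choice of bond indices
and `Φ_{(i, r)}` is the product of the `N` core entries `G^n_{r_{n-1} i_n r_n}` met along the path
`(i, r)`. These entries lie in distinct cores, so `Φ_{(i, r)}` is a square-free monomial in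
independent centred unit-variance variables. Such monomials are orthonormal in `L²` (a variable
occurring in only one of two monomials contributes a factor of mean zero), and a path is determined
by its entries. Hence `𝔼 ⟨𝒯_κ, 𝒳⟩² = #{r} · ‖𝒳‖² = R^(N-1) ‖𝒳‖²`, which the normalisation
`1 / (k R^(N-1))` and the `k` coordinates turn into `‖𝒳‖²`.
-/

theorem Finset.prod_mul_prod_eq_prod_pow {ι M : Type*} [CommMonoid M] [Fintype ι] [DecidableEq ι]
    (g : ι → M) (S T : Finset ι) :
    (∏ i ∈ S, g i) * ∏ i ∈ T, g i =
      ∏ i, g i ^ ((if i ∈ S then 1 else 0) + (if i ∈ T then 1 else 0)) := by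
  simp only [pow_add, prod_mul_distrib, pow_ite, pow_one, pow_zero, prod_ite_mem, univ_inter]

theorem Finset.sq_sum_mul_eq_sum_sum {β R : Type*} [Fintype β] [CommSemiring R] (a x : β → R) :
    (∑ b, a b * x b) ^ 2 = ∑ b, ∑ b', a b * a b' * (x b * x b') := by
  rw [sq, sum_mul_sum]
  exact sum_congr rfl fun b _ => sum_congr rfl fun b' _ => by ring

section SigmaGraph

variable {α : Type*} [Fintype α] {T : α → Type*}

def sigmaGraph (c : (a : α) → T a) : Finset (Σ a, T a) :=
  univ.map ⟨fun a => ⟨a, c a⟩, fun _ _ h => congrArg Sigma.fst h⟩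

theorem prod_sigmaGraph {M : Type*} [CommMonoid M] (g : (Σ a, T a) → M) (c : (a : α) → T a) :
    ∏ y ∈ sigmaGraph c, g y = ∏ a, g ⟨a, c a⟩ :=
  prod_map _ _ _

theorem sigmaGraph_injective : Function.Injective (sigmaGraph (T := T)) := by
  intro c c' h
  funext a
  have ha : (⟨a, c a⟩ : Σ a, T a) ∈ sigmaGraph c' := h ▸ mem_map_of_mem _ (mem_univ a)
  obtain ⟨b, -, hb⟩ := mem_map.1 ha
  obtain ⟨rfl, hcb⟩ := Sigma.mk.inj_iff.1 hb
  exact (eq_of_heq hcb).symm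

end SigmaGraph

namespace ProbabilityTheory.HasLaw

variable {Ω : Type*} [MeasurableSpace Ω] {P : Measure Ω} {X : Ω → ℝ}

theorem memLp_of_gaussianReal {m : ℝ} {v : NNReal} (hX : HasLaw X (gaussianReal m v) P)
    {p : ENNReal} (hp : p ≠ ⊤) : MemLp X p P :=
  (hX.map_eq ▸ memLp_id_gaussianReal' p hp).comp_of_map hX.aemeasurable

theorem integral_eq_of_gaussianReal {m : ℝ} {v : NNReal} (hX : HasLaw X (gaussianReal m v) P) :
    ∫ ω, X ω ∂P = m :=
  hX.integral_eq.trans integral_id_gaussianReal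

theorem integral_sq_of_gaussianReal {v : NNReal} (hX : HasLaw X (gaussianReal 0 v) P) :
    ∫ ω, X ω ^ 2 ∂P = v := by
  rw [← variance_of_integral_eq_zero hX.aemeasurable hX.integral_eq_of_gaussianReal,
    hX.variance_eq, variance_id_gaussianReal]

end ProbabilityTheory.HasLaw

section SquareFreeMonomials

variable {Ω ι : Type*} [MeasurableSpace Ω] {μ : Measure Ω} {Z : ι → Ω → ℝ}

theorem ProbabilityTheory.iIndepFun.integrable_fun_finset_prod (hZ : iIndepFun Z μ)
    (hmeas : ∀ i, Measurable (Z i)) (hint : ∀ i, Integrable (Z i) μ) (s : Finset ι) :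
    Integrable (fun ω => ∏ i ∈ s, Z i ω) μ := by
  classical
  have := hZ.isProbabilityMeasure
  induction s using Finset.induction_on with
  | empty => simp
  | insert a s ha ih =>
    have := (hZ.indepFun_finsetProd_of_notMem hmeas ha).symm.integrable_mul (hint a)
      (prod_fn s Z ▸ ih)
    simpa [prod_insert ha, prod_fn, Pi.mul_def] using this

variable [Fintype ι] [DecidableEq ι]

theorem integrable_prod_mul_prod (hZ : iIndepFun Z μ) (hmeas : ∀ i, Measurable (Z i))
    (hL2 : ∀ i, MemLp (Z i) 2 μ) (S T : Finset ι) :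
    Integrable (fun ω => (∏ i ∈ S, Z i ω) * ∏ i ∈ T, Z i ω) μ := by
  have := hZ.isProbabilityMeasure
  set m : ι → ℕ := fun i => (if i ∈ S then 1 else 0) + (if i ∈ T then 1 else 0)
  have hpow : ∀ i, Integrable (fun ω => Z i ω ^ m i) μ := by
    intro i
    obtain h | h | h : m i = 0 ∨ m i = 1 ∨ m i = 2 := by grind
    all_goals rw [h]
    · simp
    · simpa using (hL2 i).integrable one_le_two
    · exact (hL2 i).integrable_sq
  simp_rw [prod_mul_prod_eq_prod_pow]
  exact (hZ.comp (fun i x => x ^ m i) fun i => by fun_prop).integrable_fun_finset_prod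
    (fun i => (hmeas i).pow_const _) hpow univ

theorem integral_prod_mul_prod (hZ : iIndepFun Z μ) (hmeas : ∀ i, Measurable (Z i))
    (hmean : ∀ i, ∫ ω, Z i ω ∂μ = 0) (hsq : ∀ i, ∫ ω, Z i ω ^ 2 ∂μ = 1) (S T : Finset ι) :
    ∫ ω, (∏ i ∈ S, Z i ω) * ∏ i ∈ T, Z i ω ∂μ = if S = T then 1 else 0 := by
  have := hZ.isProbabilityMeasure
  set m : ι → ℕ := fun i => (if i ∈ S then 1 else 0) + (if i ∈ T then 1 else 0)
  have hmoment : ∀ i, ∫ ω, Z i ω ^ m i ∂μ = if (i ∈ S ↔ i ∈ T) then 1 else 0 := by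
    intro i
    by_cases hS : i ∈ S <;> by_cases hT : i ∈ T <;> simp [m, hS, hT, hmean, hsq]
  simp_rw [prod_mul_prod_eq_prod_pow]
  rw [hZ.integral_fun_prod_comp (f := fun i x => x ^ m i) (fun i => (hmeas i).aemeasurable)
    (fun i => by fun_prop)]
  simp_rw [hmoment, prod_boole, Finset.ext_iff]
  simp

end SquareFreeMonomials

section SigmaMonomials

variable {Ω α : Type*} [MeasurableSpace Ω] {μ : Measure Ω} [Fintype α] {T : α → Type*}
  [∀ a, Fintype (T a)] {Y : (Σ a, T a) → Ω → ℝ}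

theorem integrable_prod_sigma_mul_prod_sigma (hY : iIndepFun Y μ)
    (hmeas : ∀ y, Measurable (Y y)) (hL2 : ∀ y, MemLp (Y y) 2 μ) (c c' : (a : α) → T a) :
    Integrable (fun ω => (∏ a, Y ⟨a, c a⟩ ω) * ∏ a, Y ⟨a, c' a⟩ ω) μ := by
  classical
  have h (c : (a : α) → T a) (ω : Ω) : ∏ a, Y ⟨a, c a⟩ ω = ∏ y ∈ sigmaGraph c, Y y ω :=
    (prod_sigmaGraph (Y · ω) c).symm
  simp only [h]
  exact integrable_prod_mul_prod hY hmeas hL2 _ _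

theorem integral_prod_sigma_mul_prod_sigma [DecidableEq ((a : α) → T a)] (hY : iIndepFun Y μ)
    (hmeas : ∀ y, Measurable (Y y)) (hmean : ∀ y, ∫ ω, Y y ω ∂μ = 0)
    (hsq : ∀ y, ∫ ω, Y y ω ^ 2 ∂μ = 1) (c c' : (a : α) → T a) :
    ∫ ω, (∏ a, Y ⟨a, c a⟩ ω) * ∏ a, Y ⟨a, c' a⟩ ω ∂μ = if c = c' then 1 else 0 := by
  classical
  have h (c : (a : α) → T a) (ω : Ω) : ∏ a, Y ⟨a, c a⟩ ω = ∏ y ∈ sigmaGraph c, Y y ω :=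
    (prod_sigmaGraph (Y · ω) c).symm
  simp only [h]
  rw [integral_prod_mul_prod hY hmeas hmean hsq]
  exact if_congr sigmaGraph_injective.eq_iff rfl rfl

end SigmaMonomials

section Orthonormal

variable {Ω β : Type*} [MeasurableSpace Ω] {μ : Measure Ω} [Fintype β] {Φ : β → Ω → ℝ}

theorem integrable_sq_sum (hint : ∀ b b', Integrable (fun ω => Φ b ω * Φ b' ω) μ)
    (a : β → ℝ) : Integrable (fun ω => (∑ b, a b * Φ b ω) ^ 2) μ := by
  simp_rw [sq_sum_mul_eq_sum_sum]
  exact integrable_finsetSum _ fun b _ => integrable_finsetSum _ fun b' _ =>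
    (hint b b').const_mul _

theorem integral_sq_sum_of_orthonormal [DecidableEq β]
    (hint : ∀ b b', Integrable (fun ω => Φ b ω * Φ b' ω) μ)
    (horth : ∀ b b', ∫ ω, Φ b ω * Φ b' ω ∂μ = if b = b' then 1 else 0) (a : β → ℝ) :
    ∫ ω, (∑ b, a b * Φ b ω) ^ 2 ∂μ = ∑ b, a b ^ 2 := by
  simp_rw [sq_sum_mul_eq_sum_sum]
  rw [integral_finsetSum _ fun b _ => integrable_finsetSum _ fun b' _ => (hint b b').const_mul _]
  refine sum_congr rfl fun b _ => ?_
  rw [integral_finsetSum _ fun b' _ => (hint b b').const_mul _]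
  simp [integral_const_mul, horth, sq]

end Orthonormal
section TensorTrain

variable {N : ℕ} {d : Fin N → ℕ} {ρ : Fin (N + 1) → ℕ}

/-- A path through the tensor train: a multi-index `i` together with bond indices `r`. -/
abbrev TTPath (d : Fin N → ℕ) (ρ : Fin (N + 1) → ℕ) : Type :=
  ((n : Fin N) → Fin (d n)) × ((n : Fin (N + 1)) → Fin (ρ n))

def ttPathEntries (w : TTPath d ρ) :
    (n : Fin N) → Fin (ρ n.castSucc) × Fin (d n) × Fin (ρ n.succ) :=
  fun n => (w.2 n.castSucc, w.1 n, w.2 n.succ)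

theorem ttPathEntries_injective [Subsingleton (Fin (ρ (Fin.last N)))] :
    Function.Injective (ttPathEntries (d := d) (ρ := ρ)) := by
  rintro ⟨i, r⟩ ⟨j, s⟩ h
  have hn : ∀ n, r n.castSucc = s n.castSucc ∧ i n = j n ∧ r n.succ = s n.succ := fun n => by
    simpa [ttPathEntries] using congrFun h n
  refine Prod.ext (funext fun n => (hn n).2.1) (funext fun t => ?_)
  induction t using Fin.lastCases with
  | last => exact Subsingleton.elim _ _
  | cast n => exact (hn n).1

theorem card_ttBonds {R : ℕ} (hρ0 : ρ 0 = 1) (hρlast : ρ (Fin.last N) = 1)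
    (hρmid : ∀ n : Fin (N + 1), n ≠ 0 → n ≠ Fin.last N → ρ n = R) :
    Fintype.card ((n : Fin (N + 1)) → Fin (ρ n)) = R ^ (N - 1) := by
  rw [Fintype.card_pi]
  simp only [Fintype.card_fin]
  rw [Fin.prod_univ_succ, hρ0, one_mul]
  cases N with
  | zero => simp
  | succ M =>
    rw [Fin.prod_univ_castSucc, Fin.succ_last, hρlast, mul_one,
      prod_congr rfl fun n _ => hρmid _ (Fin.succ_ne_zero _)
        (Fin.succ_castSucc n ▸ (Fin.castSucc_lt_last _).ne),
      prod_const, card_univ, Fintype.card_fin, Nat.add_sub_cancel]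

/-- The pairing `⟨𝒯, 𝒳⟩` of the tensor train `𝒯 = ⟦G⟧` with `X`. -/
def ttInner (d : Fin N → ℕ) (ρ : Fin (N + 1) → ℕ)
    (G : (n : Fin N) → Fin (ρ n.castSucc) → Fin (d n) → Fin (ρ n.succ) → ℝ)
    (X : ((n : Fin N) → Fin (d n)) → ℝ) : ℝ :=
  ∑ i, X i * ∑ a, ∑ b, ttPath d ρ G i a b

theorem sum_sum_ttPath (G : (n : Fin N) → Fin (ρ n.castSucc) → Fin (d n) → Fin (ρ n.succ) → ℝ)
    (i : (n : Fin N) → Fin (d n)) :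
    ∑ a, ∑ b, ttPath d ρ G i a b =
      ∑ r : (n : Fin (N + 1)) → Fin (ρ n), ∏ n, G n (r n.castSucc) (i n) (r n.succ) := by
  classical
  simp only [ttPath]
  calc _ = ∑ r : (n : Fin (N + 1)) → Fin (ρ n), ∑ a, ∑ b,
        if r 0 = a ∧ r (Fin.last N) = b then ∏ n, G n (r n.castSucc) (i n) (r n.succ) else 0 := by
        conv_lhs => arg 2; ext a; rw [sum_comm]
        rw [sum_comm]
    _ = _ := by simp [ite_and]

section RandomCores

variable {Ω : Type*} {Y : (Σ n : Fin N, Fin (ρ n.castSucc) × Fin (d n) × Fin (ρ n.succ)) → Ω → ℝ}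

theorem ttInner_eq_sum_ttPath (X : ((n : Fin N) → Fin (d n)) → ℝ) (ω : Ω) :
    ttInner d ρ (fun n a j b => Y ⟨n, (a, j, b)⟩ ω) X =
      ∑ w : TTPath d ρ, X w.1 * ∏ n, Y ⟨n, ttPathEntries w n⟩ ω := by
  simp only [ttInner, sum_sum_ttPath, mul_sum, Fintype.sum_prod_type]
  rfl

variable [MeasurableSpace Ω] {μ : Measure Ω}

theorem integrable_sq_ttInner (hY : iIndepFun Y μ) (hmeas : ∀ p, Measurable (Y p))
    (hL2 : ∀ p, MemLp (Y p) 2 μ) (X : ((n : Fin N) → Fin (d n)) → ℝ) :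
    Integrable (fun ω => ttInner d ρ (fun n a j b => Y ⟨n, (a, j, b)⟩ ω) X ^ 2) μ := by
  simp_rw [ttInner_eq_sum_ttPath]
  exact integrable_sq_sum
    (fun w w' => integrable_prod_sigma_mul_prod_sigma hY hmeas hL2 (ttPathEntries w)
      (ttPathEntries w')) _

theorem integral_sq_ttInner [Subsingleton (Fin (ρ (Fin.last N)))] (hY : iIndepFun Y μ)
    (hmeas : ∀ p, Measurable (Y p)) (hL2 : ∀ p, MemLp (Y p) 2 μ) (hmean : ∀ p, ∫ ω, Y p ω ∂μ = 0)
    (hsq : ∀ p, ∫ ω, Y p ω ^ 2 ∂μ = 1) (X : ((n : Fin N) → Fin (d n)) → ℝ) :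
    ∫ ω, ttInner d ρ (fun n a j b => Y ⟨n, (a, j, b)⟩ ω) X ^ 2 ∂μ =
      Fintype.card ((n : Fin (N + 1)) → Fin (ρ n)) * ∑ i, X i ^ 2 := by
  classical
  have horth (w w' : TTPath d ρ) : ∫ ω, (∏ n, Y ⟨n, ttPathEntries w n⟩ ω) *
      ∏ n, Y ⟨n, ttPathEntries w' n⟩ ω ∂μ = if w = w' then 1 else 0 := by
    rw [integral_prod_sigma_mul_prod_sigma hY hmeas hmean hsq]
    exact if_congr ttPathEntries_injective.eq_iff rfl rfl
  simp_rw [ttInner_eq_sum_ttPath]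
  rw [integral_sq_sum_of_orthonormal (fun w w' => integrable_prod_sigma_mul_prod_sigma hY hmeas hL2
    (ttPathEntries w) (ttPathEntries w')) horth]
  simp [Fintype.sum_prod_type, mul_sum]

end RandomCores

end TensorTrain

theorem tt_gaussian_rp_expected_isometry_general
    {Ω : Type} [MeasurableSpace Ω] (μ : Measure Ω)
    (N k : ℕ) (hk : 1 ≤ k)
    (d : Fin N → ℕ) (R : ℕ) (hR : 0 < R)
    (ρ : Fin (N + 1) → ℕ) (hρ0 : ρ 0 = 1) (hρlast : ρ (Fin.last N) = 1)
    (hρmid : ∀ n : Fin (N + 1), n ≠ 0 → n ≠ Fin.last N → ρ n = R)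
    (X : ((n : Fin N) → Fin (d n)) → ℝ)
    (G : Ω → Fin k → (n : Fin N) → Fin (ρ n.castSucc) → Fin (d n) → Fin (ρ n.succ) → ℝ)
    (hGmeas : ∀ κ n a i b, Measurable (fun ω => G ω κ n a i b))
    (hGdist : ∀ κ n a i b, Measure.map (fun ω => G ω κ n a i b) μ = gaussianReal 0 1)
    (hGindep : iIndepFun
      (fun p : Fin k × (Σ n : Fin N, Fin (ρ n.castSucc) × Fin (d n) × Fin (ρ n.succ)) =>
        fun ω => G ω p.1 p.2.1 p.2.2.1 p.2.2.2.1 p.2.2.2.2) μ)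
    (f : Ω → Fin k → ℝ)
    (hf : ∀ ω κ, f ω κ = (1 / Real.sqrt ((k : ℝ) * (R : ℝ) ^ (N - 1))) *
      ∑ i, X i * ∑ a, ∑ b, ttPath d ρ (G ω κ) i a b) :
    ∫ ω, ∑ κ, (f ω κ) ^ 2 ∂μ = ∑ i, (X i) ^ 2 := by
  have : Subsingleton (Fin (ρ (Fin.last N))) := hρlast ▸ inferInstance
  let Y (κ : Fin k) (p : Σ n : Fin N, Fin (ρ n.castSucc) × Fin (d n) × Fin (ρ n.succ)) (ω : Ω) :=
    G ω κ p.1 p.2.1 p.2.2.1 p.2.2.2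
  have hYlaw (κ p) : HasLaw (Y κ p) (gaussianReal 0 1) μ := ⟨(hGmeas ..).aemeasurable, hGdist ..⟩
  have hYindep (κ) : iIndepFun (Y κ) μ := hGindep.precomp (Prod.mk_right_injective κ)
  have hL2 (κ p) : MemLp (Y κ p) 2 μ := (hYlaw κ p).memLp_of_gaussianReal ENNReal.ofNat_ne_top
  have hint (κ) : Integrable (fun ω => ttInner d ρ (G ω κ) X ^ 2) μ :=
    integrable_sq_ttInner (hYindep κ) (fun _ => hGmeas ..) (hL2 κ) X
  have hsq (κ) : ∫ ω, ttInner d ρ (G ω κ) X ^ 2 ∂μ = R ^ (N - 1) * ∑ i, X i ^ 2 := by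
    rw [integral_sq_ttInner (hYindep κ) (fun _ => hGmeas ..) (hL2 κ)
      (fun p => (hYlaw κ p).integral_eq_of_gaussianReal)
      (fun p => by simpa using (hYlaw κ p).integral_sq_of_gaussianReal),
      card_ttBonds hρ0 hρlast hρmid, Nat.cast_pow]
  have hc : (1 / Real.sqrt ((k : ℝ) * R ^ (N - 1))) ^ 2 = ((k : ℝ) * R ^ (N - 1))⁻¹ := by
    rw [div_pow, one_pow, Real.sq_sqrt (by positivity), one_div]
  have hf' (ω κ) : f ω κ = 1 / Real.sqrt ((k : ℝ) * R ^ (N - 1)) * ttInner d ρ (G ω κ) X := hf ω κ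
  simp_rw [hf', mul_pow]
  rw [integral_finsetSum _ fun κ _ => (hint κ).const_mul _]
  simp only [integral_const_mul, hsq, hc, sum_const, card_univ, Fintype.card_fin, nsmul_eq_mul]
  field_simp

/-- Expected isometry of the tensorized Gaussian random projection `f^TT_R`:
`𝔼 ‖f^TT_R(𝒳)‖₂² = ‖𝒳‖_F²`. -/
theorem tt_gaussian_rp_expected_isometry
    {Ω : Type} [MeasurableSpace Ω] (μ : Measure Ω) [IsProbabilityMeasure μ]
    (N k : ℕ) (hN : 1 ≤ N) (hk : 1 ≤ k)
    (d : Fin N → ℕ) (hd : ∀ n, 0 < d n) (R : ℕ) (hR : 0 < R)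
    (ρ : Fin (N + 1) → ℕ) (hρ0 : ρ 0 = 1) (hρlast : ρ (Fin.last N) = 1)
    (hρmid : ∀ n : Fin (N + 1), n ≠ 0 → n ≠ Fin.last N → ρ n = R)
    (X : ((n : Fin N) → Fin (d n)) → ℝ)
    (G : Ω → Fin k → (n : Fin N) → Fin (ρ n.castSucc) → Fin (d n) → Fin (ρ n.succ) → ℝ)
    (hGmeas : ∀ κ n a i b, Measurable (fun ω => G ω κ n a i b))
    (hGdist : ∀ κ n a i b, Measure.map (fun ω => G ω κ n a i b) μ = gaussianReal 0 1)
    (hGindep : iIndepFun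
      (fun p : Fin k × (Σ n : Fin N, Fin (ρ n.castSucc) × Fin (d n) × Fin (ρ n.succ)) =>
        fun ω => G ω p.1 p.2.1 p.2.2.1 p.2.2.2.1 p.2.2.2.2) μ)
    (f : Ω → Fin k → ℝ)
    (hf : ∀ ω κ, f ω κ = (1 / Real.sqrt ((k : ℝ) * (R : ℝ) ^ (N - 1))) *
      ∑ i, X i * ∑ a, ∑ b, ttPath d ρ (G ω κ) i a b) :
    ∫ ω, ∑ κ, (f ω κ) ^ 2 ∂μ = ∑ i, (X i) ^ 2 :=
  tt_gaussian_rp_expected_isometry_general μ N k hk d R hR ρ hρ0 hρlast hρmid X G hGmeas hGdist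
    hGindep f hf

end
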